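/- arXiv:1811.05876 — 3 statements merged into one kernel-verified Lean document; each statement's English description precedes it below -/
import Mathlib

section
/- Let (C, N) be a regular multi-pointed category with N-kernels, coequalisers of kernel stars, and such that every regular diamond with identity right edge is left saturated. Then C is star-regular if and only if a morphism m : U → V is a monomorphism precisely when its kernel star M* equals the star Δ*_U of the discrete relation on U. -/
/-!
If monomorphisms are exactly the morphisms with kernel star `Δ*`, take a regular epi `f`, its
kernel star `F*` and the coequaliser `q` of `F*`, so that `f = q ≫ m`. The image `q(F*)` lies on
the diagonal, and left saturation of the diamond `q ≫ m = f ≫ 𝟙` makes it the kernel star of `m`;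
hence `m` is mono, so an isomorphism, and `f` coequalises `F*`. Conversely, if regular epis
coequalise stars, write `m = e ≫ n` with `e` regular epi and `n` mono: the star coequalised by `e`
is contained in the kernel star of `m`, which is `Δ*`, so `e` is an isomorphism and `m` is mono.
-/

open CategoryTheory CategoryTheory.Limits

universe v u

namespace StarReg

variable {C : Type u} [Category.{v} C]

/-- An ideal of morphisms in the sense of Ehresmann. -/
def IsIdealClass (N : MorphismProperty C) : Prop :=
  (∀ ⦃X Y Z : C⦄ (f : X ⟶ Y) (g : Y ⟶ Z), N f → N (f ≫ g)) ∧
  (∀ ⦃X Y Z : C⦄ (f : X ⟶ Y) (g : Y ⟶ Z), N g → N (f ≫ g))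

/-- `k` is an `N`-kernel of `f`. -/
def IsNKernel (N : MorphismProperty C) {K X Y : C} (k : K ⟶ X) (f : X ⟶ Y) : Prop :=
  N (k ≫ f) ∧ ∀ ⦃L : C⦄ (g : L ⟶ X), N (g ≫ f) → ∃! μ : L ⟶ K, μ ≫ k = g

def HasNKernels (N : MorphismProperty C) : Prop :=
  ∀ ⦃X Y : C⦄ (f : X ⟶ Y), ∃ (K : C) (k : K ⟶ X), IsNKernel N k f

/-- Every morphism factors as a regular epimorphism followed by a monomorphism. -/
def RegEpiMonoFactorisations (C : Type u) [Category.{v} C] : Prop :=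
  ∀ ⦃X Y : C⦄ (f : X ⟶ Y), ∃ (Z : C) (e : X ⟶ Z) (m : Z ⟶ Y),
    Nonempty (RegularEpi e) ∧ Mono m ∧ e ≫ m = f

/-- Regular epimorphisms are stable under pullback. -/
def RegEpisPullbackStable (C : Type u) [Category.{v} C] : Prop :=
  ∀ ⦃P X Y Z : C⦄ (fst : P ⟶ X) (snd : P ⟶ Y) (f : X ⟶ Z) (g : Y ⟶ Z),
    IsPullback fst snd f g → Nonempty (RegularEpi g) → Nonempty (RegularEpi fst)

/-- A star: a pair of parallel morphisms whose first component lies in `N`. -/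
structure Star (N : MorphismProperty C) (X : C) where
  T : C
  a : T ⟶ X
  b : T ⟶ X
  ha : N a

/-- A monic star: the pair is jointly monomorphic. -/
def Star.Monic {N : MorphismProperty C} {X : C} (s : Star N X) : Prop :=
  ∀ ⦃W : C⦄ (u v : W ⟶ s.T), u ≫ s.a = v ≫ s.a → u ≫ s.b = v ≫ s.b → u = v

/-- `s` is the kernel star of `f`. -/
def IsKernelStar {N : MorphismProperty C} {X Y : C} (f : X ⟶ Y) (s : Star N X) : Prop :=
  s.a ≫ f = s.b ≫ f ∧
  ∀ t : Star N X, t.a ≫ f = t.b ≫ f →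
    ∃! u : t.T ⟶ s.T, u ≫ s.a = t.a ∧ u ≫ s.b = t.b

/-- `t` is the (regular epi, monic star) image of the star `s` along `f`. -/
def IsImageFact {N : MorphismProperty C} {X Y : C} (f : X ⟶ Y) (s : Star N X)
    (t : Star N Y) : Prop :=
  t.Monic ∧ ∃ e : s.T ⟶ t.T,
    Nonempty (RegularEpi e) ∧ e ≫ t.a = s.a ≫ f ∧ e ≫ t.b = s.b ≫ f

/-- `f` is a coequaliser of the star `s`. -/
def IsStarCoequalizer {N : MorphismProperty C} {X Q : C} (s : Star N X) (f : X ⟶ Q) : Prop :=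
  s.a ≫ f = s.b ≫ f ∧
  ∀ ⦃W : C⦄ (h : X ⟶ W), s.a ≫ h = s.b ≫ h → ∃! u : Q ⟶ W, f ≫ u = h

/-- `s` is the star `Δ*_X` of the discrete relation on `X`. -/
def IsDeltaStar {N : MorphismProperty C} {X : C} (s : Star N X) : Prop :=
  s.a = s.b ∧ IsNKernel N s.a (𝟙 X)

def RegEpisAreStarCoequalizers (N : MorphismProperty C) : Prop :=
  ∀ ⦃X Y : C⦄ (f : X ⟶ Y), Nonempty (RegularEpi f) →
    ∃ s : Star N X, IsStarCoequalizer s f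

/-- A star-regular category: regular multi-pointed with `N`-kernels, every regular
epimorphism a coequaliser of a star. -/
def StarRegular (N : MorphismProperty C) : Prop :=
  IsIdealClass N ∧ HasNKernels N ∧ RegEpiMonoFactorisations C ∧
    RegEpisPullbackStable C ∧ RegEpisAreStarCoequalizers N

def HasKernelStarCoequalizers (N : MorphismProperty C) : Prop :=
  ∀ ⦃X Y : C⦄ (f : X ⟶ Y) (s : Star N X), IsKernelStar f s →
    ∃ (Q : C) (q : X ⟶ Q), IsStarCoequalizer s q

/-- `f` is saturating: the image of `Δ*` along `f` is `Δ*`. -/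
def Saturating (N : MorphismProperty C) {X Y : C} (f : X ⟶ Y) : Prop :=
  ∀ (s : Star N X) (t : Star N Y), IsDeltaStar s → IsImageFact f s t → IsDeltaStar t

/-- The diamond `e ≫ g = f ≫ h` is right saturated: `f(E*) = H*`. -/
def RightSaturated (N : MorphismProperty C) {X Y Z W : C}
    (e : X ⟶ Z) (f : X ⟶ Y) (_g : Z ⟶ W) (h : Y ⟶ W) : Prop :=
  ∀ (s : Star N X) (t : Star N Y), IsKernelStar e s → IsImageFact f s t → IsKernelStar h t

/-- The diamond `e ≫ g = f ≫ h` is left saturated: `e(F*) = G*`. -/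
def LeftSaturated (N : MorphismProperty C) {X Y Z W : C}
    (e : X ⟶ Z) (f : X ⟶ Y) (g : Z ⟶ W) (_h : Y ⟶ W) : Prop :=
  ∀ (s : Star N X) (t : Star N Z), IsKernelStar f s → IsImageFact e s t → IsKernelStar g t

/-- `s` is a kernel star (of some morphism). -/
def IsAKernelStar {N : MorphismProperty C} {X : C} (s : Star N X) : Prop :=
  ∃ (W : C) (w : X ⟶ W), IsKernelStar w s

/-- Inclusion of stars on the same object. -/
def StarLE {N : MorphismProperty C} {X : C} (s t : Star N X) : Prop :=
  ∃ m : s.T ⟶ t.T, m ≫ t.a = s.a ∧ m ≫ t.b = s.b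

/-- Property (*): images along coequalisers of smaller kernel stars of kernel stars are
kernel stars. -/
def PropertyStar (N : MorphismProperty C) : Prop :=
  ∀ ⦃A Q : C⦄ (F G : Star N A) (f : A ⟶ Q),
    IsKernelStar f F → IsStarCoequalizer F f → IsAKernelStar G → StarLE F G →
    ∀ t : Star N Q, IsImageFact f G t → IsAKernelStar t

/-- `σ` (with comparison `j`) is the star-pullback of `τ` along `g`. -/
def IsStarPullback {N : MorphismProperty C} {X Y : C} (g : X ⟶ Y) (τ : Star N Y)
    (σ : Star N X) (j : σ.T ⟶ τ.T) : Prop :=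
  σ.a ≫ g = j ≫ τ.a ∧ σ.b ≫ g = j ≫ τ.b ∧
  ∀ (ρ : Star N X) (w : ρ.T ⟶ τ.T), ρ.a ≫ g = w ≫ τ.a → ρ.b ≫ g = w ≫ τ.b →
    ∃! h : ρ.T ⟶ σ.T, h ≫ σ.a = ρ.a ∧ h ≫ σ.b = ρ.b ∧ h ≫ j = w

def HasRegEpiPushouts (C : Type u) [Category.{v} C] : Prop :=
  ∀ ⦃X Y Z : C⦄ (f : X ⟶ Y) (g : X ⟶ Z), Nonempty (RegularEpi f) → Nonempty (RegularEpi g) →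
    ∃ (W : C) (p : Y ⟶ W) (q : Z ⟶ W), IsPushout f g p q

section

variable {C : Type u} [Category.{v} C] {N : MorphismProperty C}

lemma IsNKernel.mono (hN : IsIdealClass N) {K X Y : C} {k : K ⟶ X} {f : X ⟶ Y}
    (h : IsNKernel N k f) : Mono k := by
  refine ⟨fun u v huv => ?_⟩
  obtain ⟨μ, -, hμ⟩ := h.2 (u ≫ k) (by rw [Category.assoc]; exact hN.2 _ _ h.1)
  rw [hμ u rfl, hμ v huv.symm]

/-- The `N`-kernel `k` of `𝟙 Q` is a mono with `N k` through which every `N`-morphism into `Q`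
factors; a strong epi `e` lifts against it. -/
lemma mem_of_strongEpi_comp (hN : IsIdealClass N) (hker : HasNKernels N) {X Z Q : C}
    (e : X ⟶ Z) [StrongEpi e] {n : Z ⟶ Q} (h : N (e ≫ n)) : N n := by
  obtain ⟨K, k, hk⟩ := hker (𝟙 Q)
  have : Mono k := hk.mono hN
  obtain ⟨μ, hμ, -⟩ := hk.2 (e ≫ n) (by rwa [Category.comp_id])
  have sq : CommSq μ e k n := ⟨hμ⟩
  rw [← sq.fac_right]
  exact hN.2 _ _ (by simpa only [Category.comp_id] using hk.1)

lemma exists_isKernelStar {X Y : C} (f : X ⟶ Y) [HasPullback f f] (hker : HasNKernels N) :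
    ∃ s : Star N X, IsKernelStar f s := by
  obtain ⟨K, k, hk⟩ := hker (pullback.fst f f)
  refine ⟨⟨K, k ≫ pullback.fst f f, k ≫ pullback.snd f f, hk.1⟩, ?_, fun t ht => ?_⟩
  · simp only [Category.assoc, pullback.condition]
  · obtain ⟨μ, hμ, huniq⟩ :=
      hk.2 (pullback.lift t.a t.b ht) (by rw [pullback.lift_fst]; exact t.ha)
    refine ⟨μ, ⟨?_, ?_⟩, fun v hv => huniq v (pullback.hom_ext ?_ ?_)⟩
    · rw [← Category.assoc, hμ, pullback.lift_fst]
    · rw [← Category.assoc, hμ, pullback.lift_snd]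
    · rw [Category.assoc, pullback.lift_fst]; exact hv.1
    · rw [Category.assoc, pullback.lift_snd]; exact hv.2

lemma IsKernelStar.starLE {X Y : C} {f : X ⟶ Y} {s t : Star N X} (hs : IsKernelStar f s)
    (ht : t.a ≫ f = t.b ≫ f) : StarLE t s :=
  (hs.2 t ht).exists

lemma StarLE.fst_eq_snd {X : C} {s t : Star N X} (h : StarLE s t) (ht : t.a = t.b) :
    s.a = s.b := by
  obtain ⟨m, hma, hmb⟩ := h
  rw [← hma, ← hmb, ht]

lemma IsKernelStar.isDeltaStar {X Y : C} {f : X ⟶ Y} {s : Star N X} (hs : IsKernelStar f s)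
    (hab : s.a = s.b) : IsDeltaStar s := by
  refine ⟨hab, by simpa using s.ha, fun L g hg => ?_⟩
  obtain ⟨u, ⟨hua, -⟩, huniq⟩ := hs.2 ⟨L, g, g, by simpa using hg⟩ rfl
  exact ⟨u, hua, fun v hv => huniq v ⟨hv, hab ▸ hv⟩⟩

lemma IsKernelStar.isDeltaStar_of_mono {X Y : C} {m : X ⟶ Y} [Mono m] {s : Star N X}
    (hs : IsKernelStar m s) : IsDeltaStar s :=
  hs.isDeltaStar ((cancel_mono m).1 hs.1)

lemma IsKernelStar.comp_mono {X Z Y : C} {e : X ⟶ Z} (n : Z ⟶ Y) [Mono n] {s : Star N X}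
    (hs : IsKernelStar e s) : IsKernelStar (e ≫ n) s :=
  ⟨by rw [reassoc_of% hs.1], fun t ht => hs.2 t ((cancel_mono n).1 (by simpa using ht))⟩

noncomputable def IsStarCoequalizer.regularEpi {X Q : C} {s : Star N X} {q : X ⟶ Q}
    (h : IsStarCoequalizer s q) : RegularEpi q where
  W := s.T
  left := s.a
  right := s.b
  w := h.1
  isColimit := Cofork.IsColimit.mk _
    (fun c => (h.2 c.π c.condition).choose)
    (fun c => (h.2 c.π c.condition).choose_spec.1)
    (fun c m hm => (h.2 c.π c.condition).choose_spec.2 m hm)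

lemma IsStarCoequalizer.isIso_of_fst_eq_snd {X Q : C} {s : Star N X} {q : X ⟶ Q}
    (h : IsStarCoequalizer s q) (hab : s.a = s.b) : IsIso q := by
  obtain ⟨w, hw, -⟩ := h.2 (𝟙 X) (by rw [hab])
  obtain ⟨u, -, huniq⟩ := h.2 q h.1
  have hwq : w ≫ q = u := huniq (w ≫ q) (by dsimp only; rw [reassoc_of% hw])
  exact ⟨w, hw, hwq.trans (huniq (𝟙 Q) (Category.comp_id q)).symm⟩

lemma IsStarCoequalizer.comp_isIso {X Q Q' : C} {s : Star N X} {q : X ⟶ Q}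
    (h : IsStarCoequalizer s q) (m : Q ⟶ Q') [IsIso m] : IsStarCoequalizer s (q ≫ m) := by
  refine ⟨by rw [reassoc_of% h.1], fun W k hk => ?_⟩
  obtain ⟨u, hu, huniq⟩ := h.2 k hk
  refine ⟨inv m ≫ u, by simpa using hu, fun w hw => ?_⟩
  rw [← huniq (m ≫ w) (by simpa using hw)]
  simp

/-- `m` coequalises the pair `(hf.left ≫ q, hf.right ≫ q)`. -/
noncomputable def _root_.CategoryTheory.RegularEpi.ofEpiComp {X Q Y : C} {q : X ⟶ Q}
    {m : Q ⟶ Y} [Epi q] (hf : RegularEpi (q ≫ m)) : RegularEpi m where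
  W := hf.W
  left := hf.left ≫ q
  right := hf.right ≫ q
  w := by simpa only [Category.assoc] using hf.w
  isColimit := by
    have : Epi (q ≫ m) := hf.epi
    refine Cofork.IsColimit.mk _
      (fun c => (hf.desc' (q ≫ c.π) (by simpa only [Category.assoc] using c.condition)).1)
      (fun c => ?_) (fun c v hv => ?_)
    · rw [← cancel_epi q, ← Category.assoc]
      exact (hf.desc' _ _).2
    · rw [← cancel_epi (q ≫ m), (hf.desc' _ _).2, Category.assoc]
      exact congrArg (q ≫ ·) hv

lemma exists_isImageFact_of_coequalizes (hN : IsIdealClass N) (hker : HasNKernels N)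
    (hfac : RegEpiMonoFactorisations C) {X Q : C} {s : Star N X} {q : X ⟶ Q}
    (hq : s.a ≫ q = s.b ≫ q) : ∃ t : Star N Q, IsImageFact q s t ∧ t.a = t.b := by
  obtain ⟨Z, e, n, ⟨he⟩, hn, hen⟩ := hfac (s.a ≫ q)
  have : IsRegularEpi e := isRegularEpi_of_regularEpi he
  have hNn : N n := mem_of_strongEpi_comp hN hker e (hen ▸ hN.1 _ _ s.ha)
  refine ⟨⟨Z, n, n, hNn⟩, ⟨fun W u v h _ => (cancel_mono n).1 h, e, ⟨he⟩, hen, ?_⟩, rfl⟩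
  exact hen.trans hq

end

end StarReg

open CategoryTheory CategoryTheory.Limits StarReg in
theorem statement4_general {C : Type u} [Category.{v} C] (N : MorphismProperty C)
    (hfl : HasFiniteLimits C) (hN : IsIdealClass N) (hker : HasNKernels N)
    (hfac : RegEpiMonoFactorisations C)
    (hcoeq : HasKernelStarCoequalizers N)
    (hls : ∀ ⦃X Y Z : C⦄ (e : X ⟶ Z) (f : X ⟶ Y) (g : Z ⟶ Y),
      Nonempty (RegularEpi e) → Nonempty (RegularEpi f) → Nonempty (RegularEpi g) →
      e ≫ g = f → LeftSaturated N e f g (𝟙 Y)) :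
    RegEpisAreStarCoequalizers N ↔
    (∀ ⦃U V : C⦄ (m : U ⟶ V),
      (Mono m ↔ ∀ s : Star N U, IsKernelStar m s → IsDeltaStar s)) := by
  refine ⟨fun hreg U V m => ⟨fun _ s hs => hs.isDeltaStar_of_mono, fun hdelta => ?_⟩,
    fun hmono X Y f ⟨hf⟩ => ?_⟩
  · obtain ⟨Z, e, n, he, hn, rfl⟩ := hfac m
    obtain ⟨s, hs⟩ := exists_isKernelStar e hker
    obtain ⟨t, ht⟩ := hreg e he
    have : IsIso e := ht.isIso_of_fst_eq_snd
      ((hs.starLE ht.1).fst_eq_snd (hdelta s (hs.comp_mono n)).1)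
    infer_instance
  · obtain ⟨s, hs⟩ := exists_isKernelStar f hker
    obtain ⟨Q, q, hq⟩ := hcoeq f s hs
    obtain ⟨m, rfl, -⟩ := hq.2 f hs.1
    have : Epi q := hq.regularEpi.epi
    obtain ⟨t, hst, htab⟩ := exists_isImageFact_of_coequalizes hN hker hfac hq.1
    have hmt : IsKernelStar m t :=
      hls q _ m ⟨hq.regularEpi⟩ ⟨hf⟩ ⟨hf.ofEpiComp⟩ rfl s t hs hst
    have : Mono m :=
      (hmono m).2 fun t' ht' => ht'.isDeltaStar ((hmt.starLE ht'.1).fst_eq_snd htab)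
    have : IsIso m := isIso_of_regularEpi_of_mono m hf.ofEpiComp
    exact ⟨s, hq.comp_isIso m⟩

open CategoryTheory CategoryTheory.Limits StarReg in
/-- Characterisation of star-regularity: given left saturation of regular diamonds with
identity right edge, the category is star-regular iff monomorphisms are exactly the
morphisms whose kernel star is `Δ*`. -/
theorem statement4 {C : Type u} [Category.{v} C] (N : MorphismProperty C)
    (hfl : HasFiniteLimits C) (hN : IsIdealClass N) (hker : HasNKernels N)
    (hfac : RegEpiMonoFactorisations C) (hpb : RegEpisPullbackStable C)
    (hcoeq : HasKernelStarCoequalizers N)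
    (hls : ∀ ⦃X Y Z : C⦄ (e : X ⟶ Z) (f : X ⟶ Y) (g : Z ⟶ Y),
      Nonempty (RegularEpi e) → Nonempty (RegularEpi f) → Nonempty (RegularEpi g) →
      e ≫ g = f → LeftSaturated N e f g (𝟙 Y)) :
    RegEpisAreStarCoequalizers N ↔
    (∀ ⦃U V : C⦄ (m : U ⟶ V),
      (Mono m ↔ ∀ s : Star N U, IsKernelStar m s → IsDeltaStar s)) :=
  statement4_general N hfl hN hker hfac hcoeq hls
end

section
/- (Diamond isomorphism theorem in a normal category) Let C be a normal category, k : K → A a kernel with cokernel f : A → A/K, and m : M → A a monomorphism. Setting K∨M := f⁻¹(f(M)), there is an isomorphism M / (K ∩ M) ≅ (K∨M) / K. -/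
open CategoryTheory CategoryTheory.Limits

universe v u

namespace PtReg

variable {C : Type u} [Category.{v} C] [HasZeroMorphisms C]

/-- `k` is a kernel of `f` in the pointed sense. -/
def IsPKernel {K X Y : C} (k : K ⟶ X) (f : X ⟶ Y) : Prop :=
  k ≫ f = 0 ∧ ∀ ⦃L : C⦄ (g : L ⟶ X), g ≫ f = 0 → ∃! u : L ⟶ K, u ≫ k = g

/-- `q` is a cokernel of `k` in the pointed sense. -/
def IsPCokernel {K X Q : C} (k : K ⟶ X) (q : X ⟶ Q) : Prop :=
  k ≫ q = 0 ∧ ∀ ⦃W : C⦄ (h : X ⟶ W), k ≫ h = 0 → ∃! u : Q ⟶ W, q ≫ u = h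

/-- A normal monomorphism: a kernel of some morphism. -/
def IsNormalMonoP {K X : C} (k : K ⟶ X) : Prop :=
  ∃ (Y : C) (f : X ⟶ Y), IsPKernel k f

/-- Every regular epimorphism is a normal epimorphism (a cokernel). -/
def RegEpisAreNormal (C : Type u) [Category.{v} C] [HasZeroMorphisms C] : Prop :=
  ∀ ⦃X Y : C⦄ (f : X ⟶ Y), Nonempty (RegularEpi f) →
    ∃ (K : C) (k : K ⟶ X), IsPCokernel k f

/-- A normal category: pointed regular, every regular epi normal. -/
def NormalCat (C : Type u) [Category.{v} C] [HasZeroMorphisms C] : Prop :=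
  StarReg.RegEpiMonoFactorisations C ∧ StarReg.RegEpisPullbackStable C ∧ RegEpisAreNormal C

/-- An internal equivalence relation. -/
def IsEquivRelPair {R X : C} (r1 r2 : R ⟶ X) : Prop :=
  (∀ ⦃W : C⦄ (u v : W ⟶ R), u ≫ r1 = v ≫ r1 → u ≫ r2 = v ≫ r2 → u = v) ∧
  (∃ d : X ⟶ R, d ≫ r1 = 𝟙 X ∧ d ≫ r2 = 𝟙 X) ∧
  (∃ s : R ⟶ R, s ≫ r1 = r2 ∧ s ≫ r2 = r1) ∧
  (∀ ⦃P : C⦄ (p1 p2 : P ⟶ R), IsPullback p1 p2 r2 r1 →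
    ∃ t : P ⟶ R, t ≫ r1 = p1 ≫ r1 ∧ t ≫ r2 = p2 ≫ r2)

/-- Barr-exactness: every equivalence relation is effective (a kernel pair). -/
def EquivRelsEffective (C : Type u) [Category.{v} C] : Prop :=
  ∀ ⦃R X : C⦄ (r1 r2 : R ⟶ X), IsEquivRelPair r1 r2 →
    ∃ (Y : C) (q : X ⟶ Y), IsPullback r1 r2 q q

/-- Protomodularity in the pointed context: the split short five lemma. -/
def SplitShortFive (C : Type u) [Category.{v} C] [HasZeroMorphisms C] : Prop :=
  ∀ ⦃K A B K' A' B' : C⦄ (k : K ⟶ A) (p : A ⟶ B) (s : B ⟶ A)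
    (k' : K' ⟶ A') (p' : A' ⟶ B') (s' : B' ⟶ A')
    (κ : K ⟶ K') (α : A ⟶ A') (β : B ⟶ B'),
    IsPKernel k p → IsPKernel k' p' → s ≫ p = 𝟙 B → s' ≫ p' = 𝟙 B' →
    k ≫ α = κ ≫ k' → p ≫ β = α ≫ p' → s ≫ α = β ≫ s' →
    IsIso κ → IsIso β → IsIso α

/-- A semi-abelian category: pointed, regular, Barr-exact, protomodular
(with a zero object, finite limits and binary coproducts as instance hypotheses). -/
def SemiAbelianCat (C : Type u) [Category.{v} C] [HasZeroMorphisms C] : Prop :=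
  StarReg.RegEpiMonoFactorisations C ∧ StarReg.RegEpisPullbackStable C ∧
    EquivRelsEffective C ∧ SplitShortFive C

end PtReg

/-!
Both quotients are the regular image `f(M)`. The kernel of `e : M ⟶ f(M)` is the kernel of
`m ≫ f`, that is `K ∩ M`; the kernel of the pullback projection `K ∨ M ⟶ f(M)` is the kernel of
`f`, that is `K`. Both maps are regular epimorphisms (`e` by construction, the projection as a
pullback of the cokernel `f`), and in a normal category a regular epimorphism is the cokernel of
its kernel.
-/

namespace PtReg

variable {C : Type u} [Category.{v} C] [HasZeroMorphisms C]

theorem IsPKernel.mono {K X Y : C} {k : K ⟶ X} {f : X ⟶ Y} (h : IsPKernel k f) : Mono k := by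
  refine ⟨fun {Z} u v huv => ?_⟩
  obtain ⟨w, -, hw⟩ := h.2 (u ≫ k) (by rw [Category.assoc, h.1, comp_zero])
  rw [hw u rfl, hw v huv.symm]

theorem IsPKernel.of_comp_mono {I X Y Z : C} {i : I ⟶ X} {e : X ⟶ Y} {n : Y ⟶ Z} [Mono n]
    (h : IsPKernel i (e ≫ n)) : IsPKernel i e :=
  ⟨(cancel_mono n).1 (by rw [Category.assoc, h.1, zero_comp]),
    fun _ x hx => h.2 x (by rw [reassoc_of% hx, zero_comp])⟩

theorem IsPKernel.isPKernel_comp_of_isPullback {K W M X Y : C} {k : K ⟶ X} {f : X ⟶ Y}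
    (hk : IsPKernel k f) {wK : W ⟶ K} {wM : W ⟶ M} {m : M ⟶ X} (hW : IsPullback wK wM k m) :
    IsPKernel wM (m ≫ f) := by
  have := hk.mono
  have := hW.mono_snd_of_mono
  refine ⟨by rw [← hW.w_assoc, hk.1, comp_zero], fun _ x hx => ?_⟩
  obtain ⟨y, hy, -⟩ := hk.2 (x ≫ m) (by rwa [Category.assoc])
  exact ⟨hW.lift y x hy, hW.lift_snd y x hy,
    fun z hz => (cancel_mono wM).1 (hz.trans (hW.lift_snd y x hy).symm)⟩

theorem IsPKernel.isPKernel_comp_of_fac {K P X Y : C} {k : K ⟶ X} {f : X ⟶ Y}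
    (hk : IsPKernel k f) {i : K ⟶ P} {p : P ⟶ X} [Mono p] (hi : i ≫ p = k) :
    IsPKernel i (p ≫ f) := by
  have := hk.mono
  have : Mono i := mono_of_mono_fac hi
  refine ⟨by rw [reassoc_of% hi, hk.1], fun _ x hx => ?_⟩
  obtain ⟨y, hy, -⟩ := hk.2 (x ≫ p) (by rwa [Category.assoc])
  have hyi : y ≫ i = x := (cancel_mono p).1 (by rw [Category.assoc, hi, hy])
  exact ⟨y, hyi, fun z hz => (cancel_mono i).1 (hz.trans hyi.symm)⟩

theorem IsPCokernel.isPKernel {K X Q : C} {k : K ⟶ X} {f : X ⟶ Q}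
    (hk : IsNormalMonoP k) (hf : IsPCokernel k f) : IsPKernel k f := by
  obtain ⟨Y, g, hg⟩ := hk
  have := hg.mono
  refine ⟨hf.1, fun _ x hx => ?_⟩
  obtain ⟨u, hu, -⟩ := hf.2 g hg.1
  obtain ⟨y, hy, -⟩ := hg.2 x (by rw [← hu, reassoc_of% hx, zero_comp])
  exact ⟨y, hy, fun z hz => (cancel_mono k).1 (hz.trans hy.symm)⟩

theorem IsPCokernel.of_isPKernel {K I X Q : C} {k : K ⟶ X} {i : I ⟶ X} {f : X ⟶ Q}
    (hf : IsPCokernel k f) (hi : IsPKernel i f) : IsPCokernel i f := by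
  refine ⟨hi.1, fun _ h hh => hf.2 h ?_⟩
  obtain ⟨v, hv, -⟩ := hi.2 k hf.1
  rw [← hv, Category.assoc, hh, comp_zero]

theorem isPCokernel_of_regularEpi (hnorm : RegEpisAreNormal C) {I X Q : C} {i : I ⟶ X}
    {q : X ⟶ Q} (hq : Nonempty (RegularEpi q)) (hi : IsPKernel i q) : IsPCokernel i q := by
  obtain ⟨_, _, hk⟩ := hnorm q hq
  exact hk.of_isPKernel hi

noncomputable def IsPCokernel.isColimit {K X Q : C} {k : K ⟶ X} {q : X ⟶ Q}
    (h : IsPCokernel k q) : IsColimit (CokernelCofork.ofπ q h.1) :=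
  CokernelCofork.IsColimit.ofπ _ _ (fun g hg => (h.2 g hg).choose)
    (fun g hg => (h.2 g hg).choose_spec.1) (fun g hg u hu => (h.2 g hg).choose_spec.2 u hu)

theorem IsPCokernel.regularEpi {K X Q : C} {k : K ⟶ X} {q : X ⟶ Q} (h : IsPCokernel k q) :
    Nonempty (RegularEpi q) :=
  ⟨@NormalEpi.regularEpi _ _ _ _ _ q ⟨K, k, h.1, h.isColimit⟩⟩

noncomputable def IsPCokernel.iso {K X Q₁ Q₂ : C} {k : K ⟶ X} {q₁ : X ⟶ Q₁} {q₂ : X ⟶ Q₂}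
    (h₁ : IsPCokernel k q₁) (h₂ : IsPCokernel k q₂) : Q₁ ≅ Q₂ :=
  IsColimit.coconePointUniqueUpToIso h₁.isColimit h₂.isColimit

end PtReg

open CategoryTheory CategoryTheory.Limits StarReg PtReg in
theorem statement9_general {C : Type u} [Category.{v} C] [HasZeroMorphisms C]
    (hnc : NormalCat C)
    -- the kernel `k : K ⟶ A` with cokernel `f : A ⟶ Q`
    {K A Q : C} (k : K ⟶ A) (hk : IsNormalMonoP k)
    (f : A ⟶ Q) (hf : IsPCokernel k f)
    -- the monomorphism `m : M ⟶ A`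
    {M : C} (m : M ⟶ A)
    -- the regular image `f(M)`: `m ≫ f = e ≫ n`
    {FM : C} (e : M ⟶ FM) (n : FM ⟶ Q) (he : Nonempty (RegularEpi e)) (hn : Mono n)
    (hfact : e ≫ n = m ≫ f)
    -- the join `P = K ∨ M = f⁻¹(f(M))`
    {P : C} (pI : P ⟶ FM) (pA : P ⟶ A) (hP : IsPullback pI pA n f)
    -- the induced inclusion of `K` in `P`
    (iK : K ⟶ P) (hiK : iK ≫ pA = k)
    -- the intersection `K ∩ M`
    {W : C} (wK : W ⟶ K) (wM : W ⟶ M) (hW : IsPullback wK wM k m)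
    -- the quotient `M/(K ∩ M)`
    {QM : C} (qM : M ⟶ QM) (hqM : IsPCokernel wM qM)
    -- the quotient `(K ∨ M)/K`
    {QP : C} (qP : P ⟶ QP) (hqP : IsPCokernel iK qP) :
    Nonempty (QM ≅ QP) := by
  obtain ⟨-, hstab, hnorm⟩ := hnc
  have hkf : IsPKernel k f := hf.isPKernel hk
  have hkerE : IsPKernel wM e := (hfact ▸ hkf.isPKernel_comp_of_isPullback hW).of_comp_mono
  have hpA : Mono pA := hP.mono_snd_of_mono
  have hkerPI : IsPKernel iK pI := (hP.w ▸ hkf.isPKernel_comp_of_fac hiK).of_comp_mono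
  have hpI : Nonempty (RegularEpi pI) := hstab pI pA n f hP hf.regularEpi
  exact ⟨(hqM.iso (isPCokernel_of_regularEpi hnorm he hkerE)).trans
    ((isPCokernel_of_regularEpi hnorm hpI hkerPI).iso hqP)⟩

open CategoryTheory CategoryTheory.Limits StarReg PtReg in
/-- Diamond isomorphism theorem in a normal category:
`M/(K ∩ M) ≅ (K ∨ M)/K` where `K ∨ M = f⁻¹(f(M))`. -/
theorem statement9 {C : Type u} [Category.{v} C] [HasZeroMorphisms C] [HasZeroObject C]
    (hfl : HasFiniteLimits C) (hnc : NormalCat C)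
    -- the kernel `k : K ⟶ A` with cokernel `f : A ⟶ Q`
    {K A Q : C} (k : K ⟶ A) (hk : IsNormalMonoP k)
    (f : A ⟶ Q) (hf : IsPCokernel k f)
    -- the monomorphism `m : M ⟶ A`
    {M : C} (m : M ⟶ A) (hm : Mono m)
    -- the regular image `f(M)`: `m ≫ f = e ≫ n`
    {FM : C} (e : M ⟶ FM) (n : FM ⟶ Q) (he : Nonempty (RegularEpi e)) (hn : Mono n)
    (hfact : e ≫ n = m ≫ f)
    -- the join `P = K ∨ M = f⁻¹(f(M))`
    {P : C} (pI : P ⟶ FM) (pA : P ⟶ A) (hP : IsPullback pI pA n f)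
    -- the induced inclusion of `K` in `P`
    (iK : K ⟶ P) (hiK : iK ≫ pA = k)
    -- the intersection `K ∩ M`
    {W : C} (wK : W ⟶ K) (wM : W ⟶ M) (hW : IsPullback wK wM k m)
    -- the quotient `M/(K ∩ M)`
    {QM : C} (qM : M ⟶ QM) (hqM : IsPCokernel wM qM)
    -- the quotient `(K ∨ M)/K`
    {QP : C} (qP : P ⟶ QP) (hqP : IsPCokernel iK qP) :
    Nonempty (QM ≅ QP) :=
  statement9_general hnc k hk f hf m e n he hn hfact pI pA hP iK hiK wK wM hW qM hqM qP hqP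
end

section
/- (Zassenhaus Lemma, star-regular form) Let C be a star-regular category with pushouts of regular epimorphisms satisfying property (*). For kernel stars κ : F* ⇉ U and σ : G* ⇉ V and monomorphisms u : U → A, v : V → A, there are isomorphisms (F* ∨_U (U∩V)) / (F* ∨_U M) ≅ (U∩V)/M ≅ (G* ∨_V (U∩V)) / (G* ∨_V M), where M = (F* ∩ (V×V))* ∨_{U∩V} (G* ∩ (U×U))* is the supremum of the two restricted kernel stars on U ∩ V. -/
/-!
Both outer quotients are identified with the quotient of the image `fU(U ∩ V)` by the image
`e₁(M)` of `M`. The kernel star of `e₁ : U ∩ V ⟶ fU(U ∩ V)` is `(F* ∩ (V×V))* ≤ M`, so `(U ∩ V)/M`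
descends along `e₁` to `fU(U ∩ V)/e₁(M)`. Property (*) makes `e₁(M)` a kernel star; hence its
pullback `F* ∨_U M` along the regular epimorphism `F* ∨_U (U ∩ V) ⟶ fU(U ∩ V)` contains the
kernel pair of that map, and the quotient by `F* ∨_U M` descends to `fU(U ∩ V)/e₁(M)` as well.
-/

open CategoryTheory CategoryTheory.Limits

universe v u

namespace StarReg

variable {C : Type u} [Category.{v} C] {N : MorphismProperty C}

section Coequalizer

variable {X Q : C} {s : Star N X} {f : X ⟶ Q}

noncomputable def IsStarCoequalizer.isColimit (h : IsStarCoequalizer s f) :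
    IsColimit (Cofork.ofπ f h.1) :=
  Cofork.IsColimit.mk _ (fun c => (h.2 c.π c.condition).exists.choose)
    (fun c => (h.2 c.π c.condition).exists.choose_spec)
    (fun c _ hm => (h.2 c.π c.condition).unique hm (h.2 c.π c.condition).exists.choose_spec)

lemma IsStarCoequalizer.regularEpi_s13 (h : IsStarCoequalizer s f) : Nonempty (RegularEpi f) :=
  ⟨⟨s.T, s.a, s.b, h.1, h.isColimit⟩⟩

noncomputable def IsStarCoequalizer.iso {Q' : C} {f' : X ⟶ Q'} (h : IsStarCoequalizer s f)
    (h' : IsStarCoequalizer s f') : Q ≅ Q' :=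
  h.isColimit.coconePointUniqueUpToIso h'.isColimit

lemma IsStarCoequalizer.of_epi_comp {Y : C} {H : Star N Y} (p : X ⟶ Y) [Epi p]
    (j : s.T ⟶ H.T) (hja : s.a ≫ p = j ≫ H.a) (hjb : s.b ≫ p = j ≫ H.b)
    (hf : IsStarCoequalizer s f) {c : Y ⟶ Q} (hc : p ≫ c = f) (hH : H.a ≫ c = H.b ≫ c) :
    IsStarCoequalizer H c := by
  refine ⟨hH, fun W h hh => ?_⟩
  obtain ⟨u, hu, huniq⟩ := hf.2 (p ≫ h) (by rw [reassoc_of% hja, reassoc_of% hjb, hh])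
  refine ⟨u, (cancel_epi p).1 (by rw [reassoc_of% hc, hu]), fun u' hu' => huniq u' ?_⟩
  change f ≫ u' = p ≫ h
  rw [← hc, Category.assoc, hu']

end Coequalizer

lemma IsKernelStar.starLE_s13 {X Y : C} {f : X ⟶ Y} {M R : Star N X} (hM : IsKernelStar f M)
    (hR : R.a ≫ f = R.b ≫ f) : StarLE R M := by
  obtain ⟨m, hm, -⟩ := hM.2 R hR
  exact ⟨m, hm⟩

lemma IsKernelStar.of_comp_mono {X Y Z : C} {e : X ⟶ Y} {n : Y ⟶ Z} [Mono n] {R : Star N X}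
    (h : IsKernelStar (e ≫ n) R) : IsKernelStar e R :=
  ⟨(cancel_mono n).1 (by simpa only [Category.assoc] using h.1),
    fun t ht => h.2 t (by rw [reassoc_of% ht])⟩

lemma IsKernelStar.isStarCoequalizer (hrc : RegEpisAreStarCoequalizers N) {X Y : C}
    {e : X ⟶ Y} (he : Nonempty (RegularEpi e)) {R : Star N X} (h : IsKernelStar e R) :
    IsStarCoequalizer R e := by
  obtain ⟨s, hs⟩ := hrc e he
  obtain ⟨m, ⟨hma, hmb⟩, -⟩ := h.2 s hs.1
  exact ⟨h.1, fun W g hg => hs.2 g (by rw [← hma, ← hmb, Category.assoc, Category.assoc, hg])⟩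

lemma IsKernelStar.starPullback (hid : IsIdealClass N) {X Y Z : C} {f : Y ⟶ Z}
    {F : Star N Y} (hF : IsKernelStar f F) {g : X ⟶ Y} {R : Star N X} {j : R.T ⟶ F.T}
    (hR : IsStarPullback g F R j) : IsKernelStar (g ≫ f) R := by
  obtain ⟨hRa, hRb, hRuniv⟩ := hR
  refine ⟨by rw [reassoc_of% hRa, reassoc_of% hRb, hF.1], fun t ht => ?_⟩
  obtain ⟨wF, ⟨hwa, hwb⟩, hwuniq⟩ :=
    hF.2 ⟨t.T, t.a ≫ g, t.b ≫ g, hid.1 t.a g t.ha⟩ (by simpa only [Category.assoc] using ht)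
  obtain ⟨h, ⟨ha, hb, -⟩, huniq⟩ := hRuniv t wF hwa.symm hwb.symm
  refine ⟨h, ⟨ha, hb⟩, fun h' ⟨ha', hb'⟩ => huniq h' ⟨ha', hb', hwuniq _ ⟨?_, ?_⟩⟩⟩
  · change (h' ≫ j) ≫ F.a = t.a ≫ g
    rw [Category.assoc, ← hRa, ← Category.assoc, ha']
  · change (h' ≫ j) ≫ F.b = t.b ≫ g
    rw [Category.assoc, ← hRb, ← Category.assoc, hb']

lemma IsImageFact.coequalizes {X Y Q : C} {e : X ⟶ Y} {M : Star N X} {H : Star N Y}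
    (hH : IsImageFact e M H) {c : Y ⟶ Q} (hc : M.a ≫ e ≫ c = M.b ≫ e ≫ c) :
    H.a ≫ c = H.b ≫ c := by
  obtain ⟨-, eM, ⟨reM⟩, ha, hb⟩ := hH
  have := reM.epi
  rw [← cancel_epi eM, reassoc_of% ha, reassoc_of% hb, hc]

section StarPullback

variable {X Y Q : C} {p : X ⟶ Y} {H : Star N Y} {S : Star N X} {j : S.T ⟶ H.T}
  {q : X ⟶ Q}

lemma IsStarPullback.coequalizes (hS : IsStarPullback p H S j) (hq : S.a ≫ q = S.b ≫ q)
    (ρ : Star N X) (w : ρ.T ⟶ H.T) (ha : ρ.a ≫ p = w ≫ H.a) (hb : ρ.b ≫ p = w ≫ H.b) :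
    ρ.a ≫ q = ρ.b ≫ q := by
  obtain ⟨h, ⟨h1, h2, -⟩, -⟩ := hS.2.2 ρ w ha hb
  rw [← h1, ← h2, Category.assoc, Category.assoc, hq]

/-- The pullback of a kernel star contains the kernel pair of the map it is pulled back along. -/
lemma IsStarPullback.coequalizes_of_isAKernelStar (hid : IsIdealClass N) (hH : IsAKernelStar H)
    (hS : IsStarPullback p H S j) (hq : S.a ≫ q = S.b ≫ q) {s : Star N X}
    (hs : s.a ≫ p = s.b ≫ p) : s.a ≫ q = s.b ≫ q := by
  obtain ⟨Z, z, hz⟩ := hH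
  obtain ⟨δ, ⟨hδa, hδb⟩, -⟩ :=
    hz.2 ⟨s.T, s.a ≫ p, s.b ≫ p, hid.1 s.a p s.ha⟩ (by simp only [Category.assoc, reassoc_of% hs])
  exact hS.coequalizes hq s δ hδa.symm hδb.symm

lemma IsImageFact.coequalizes_of_starPullback (hid : IsIdealClass N) {W : C} {e : W ⟶ Y}
    {M : Star N W} (hH : IsImageFact e M H) (hS : IsStarPullback p H S j) {l : W ⟶ X}
    (hl : l ≫ p = e) (hq : S.a ≫ q = S.b ≫ q) {c : Y ⟶ Q} (hc : p ≫ c = q) :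
    H.a ≫ c = H.b ≫ c := by
  refine hH.coequalizes ?_
  obtain ⟨-, eM, -, ha, hb⟩ := hH
  have hMl := hS.coequalizes hq ⟨M.T, M.a ≫ l, M.b ≫ l, hid.1 M.a l M.ha⟩ eM
    (by rw [Category.assoc, hl, ha]) (by rw [Category.assoc, hl, hb])
  simpa only [← hl, ← hc, Category.assoc] using hMl

lemma IsStarPullback.exists_isStarCoequalizer (hid : IsIdealClass N)
    (hrc : RegEpisAreStarCoequalizers N) (hp : Nonempty (RegularEpi p)) (hHk : IsAKernelStar H)
    (hS : IsStarPullback p H S j) (hq : IsStarCoequalizer S q) {W : C} {e : W ⟶ Y}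
    {M : Star N W} (hH : IsImageFact e M H) {l : W ⟶ X} (hl : l ≫ p = e) :
    ∃ c : Y ⟶ Q, IsStarCoequalizer H c := by
  obtain ⟨s, hs⟩ := hrc p hp
  obtain ⟨c, hc, -⟩ := hs.2 q (hS.coequalizes_of_isAKernelStar hid hHk hq.1 hs.1)
  have := hp.some.epi
  exact ⟨c, hq.of_epi_comp p j hS.1 hS.2.1 hc (hH.coequalizes_of_starPullback hid hS hl hq.1 hc)⟩

end StarPullback

lemma IsImageFact.exists_isStarCoequalizer {X Y QM : C} {e : X ⟶ Y} {M R : Star N X}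
    {H : Star N Y} (hH : IsImageFact e M H) (he : IsStarCoequalizer R e) (hRM : StarLE R M)
    {qM : X ⟶ QM} (hqM : IsStarCoequalizer M qM) : ∃ w : Y ⟶ QM, IsStarCoequalizer H w := by
  obtain ⟨m, hma, hmb⟩ := hRM
  obtain ⟨w, hw, -⟩ := he.2 qM (by rw [← hma, ← hmb, Category.assoc, Category.assoc, hqM.1])
  have := he.regularEpi_s13.some.epi
  have hHw : H.a ≫ w = H.b ≫ w := hH.coequalizes (by rw [hw, hqM.1])
  obtain ⟨-, eM, -, ha, hb⟩ := hH
  exact ⟨w, hqM.of_epi_comp e eM ha.symm hb.symm hw hHw⟩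

lemma zassenhaus_half (hid : IsIdealClass N) (hstab : RegEpisPullbackStable C)
    (hrc : RegEpisAreStarCoequalizers N) (hps : PropertyStar N)
    {U QU W QM WU P Q : C} {F : Star N U} {fU : U ⟶ QU}
    (hFk : IsKernelStar fU F) (hfUc : IsStarCoequalizer F fU)
    {iU : W ⟶ U} {R : Star N W} {j : R.T ⟶ F.T} (hR : IsStarPullback iU F R j)
    {M : Star N W} (hMk : IsAKernelStar M) (hRM : StarLE R M)
    {qM : W ⟶ QM} (hqM : IsStarCoequalizer M qM)
    {e : W ⟶ WU} {n : WU ⟶ QU} (he : Nonempty (RegularEpi e)) [Mono n]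
    (hfact : e ≫ n = iU ≫ fU)
    {pI : P ⟶ WU} {pA : P ⟶ U} (hP : IsPullback pI pA n fU)
    {H : Star N WU} (hH : IsImageFact e M H)
    {S : Star N P} {jS : S.T ⟶ H.T} (hS : IsStarPullback pI H S jS)
    {q : P ⟶ Q} (hq : IsStarCoequalizer S q) : Nonempty (Q ≅ QM) := by
  have hRe : IsKernelStar e R := by
    refine IsKernelStar.of_comp_mono (n := n) ?_
    simpa only [hfact] using hFk.starPullback hid hR
  have hRc : IsStarCoequalizer R e := hRe.isStarCoequalizer hrc he
  have hHk : IsAKernelStar H := hps R M e hRe hRc hMk hRM H hH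
  obtain ⟨w, hw⟩ := hH.exists_isStarCoequalizer hRc hRM hqM
  obtain ⟨c, hc⟩ := hS.exists_isStarCoequalizer hid hrc
    (hstab pI pA n fU hP hfUc.regularEpi_s13) hHk hq hH (hP.lift_fst e iU hfact)
  exact ⟨hc.iso hw⟩

end StarReg

open CategoryTheory CategoryTheory.Limits StarReg in
theorem statement13_general {C : Type u} [Category.{v} C] (N : MorphismProperty C)
    (hsr : StarRegular N) (hps : PropertyStar N)
    -- kernel stars `F*` on `U` and `G*` on `V`, monos `u : U ⟶ A`, `v : V ⟶ A`
    {U V A : C} (F : Star N U) (G : Star N V)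
    (u : U ⟶ A) (v : V ⟶ A)
    -- coequalisers of `F*` and `G*` (of which they are the kernel stars)
    {QU : C} (fU : U ⟶ QU) (hFk : IsKernelStar fU F) (hfUc : IsStarCoequalizer F fU)
    {QV : C} (gV : V ⟶ QV) (hGk : IsKernelStar gV G) (hgVc : IsStarCoequalizer G gV)
    -- the intersection `W = U ∩ V`
    {W : C} (iU : W ⟶ U) (iV : W ⟶ V)
    -- the restricted stars `(F* ∩ (V×V))*` and `(G* ∩ (U×U))*` on `W`
    (R₁ : Star N W) (j₁ : R₁.T ⟶ F.T) (hR₁ : IsStarPullback iU F R₁ j₁)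
    (R₂ : Star N W) (j₂ : R₂.T ⟶ G.T) (hR₂ : IsStarPullback iV G R₂ j₂)
    -- their coequalisers and the pushout, with diagonal `q`
    {W₁ : C} (f₁ : W ⟶ W₁) (hf₁ : IsStarCoequalizer R₁ f₁)
    {W₂ : C} (g₁ : W ⟶ W₂) (hg₁ : IsStarCoequalizer R₂ g₁)
    {Tq : C} (p₁ : W₁ ⟶ Tq) (p₂ : W₂ ⟶ Tq) (hpush : IsPushout f₁ g₁ p₁ p₂)
    -- the supremum `M = (F* ∩ (V×V))* ∨ (G* ∩ (U×U))*`: kernel star of the diagonal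
    (M : Star N W) (hM : IsKernelStar (f₁ ≫ p₁) M)
    -- the middle quotient `(U∩V)/M`
    {QM : C} (qM : W ⟶ QM) (hqM : IsStarCoequalizer M qM)
    -- the U-side: image `fU(U∩V)`, join `P₁ = F* ∨_U (U∩V)`, image star of `M`,
    -- star `S₁ = F* ∨_U M` and its quotient
    {WU : C} (e₁ : W ⟶ WU) (n₁ : WU ⟶ QU) (he₁ : Nonempty (RegularEpi e₁)) (hn₁ : Mono n₁)
    (hfact₁ : e₁ ≫ n₁ = iU ≫ fU)
    {P₁ : C} (pI₁ : P₁ ⟶ WU) (pA₁ : P₁ ⟶ U) (hP₁ : IsPullback pI₁ pA₁ n₁ fU)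
    (H₁ : Star N WU) (hH₁ : IsImageFact e₁ M H₁)
    (S₁ : Star N P₁) (jS₁ : S₁.T ⟶ H₁.T) (hS₁ : IsStarPullback pI₁ H₁ S₁ jS₁)
    {Q₁ : C} (qP₁ : P₁ ⟶ Q₁) (hqP₁ : IsStarCoequalizer S₁ qP₁)
    -- the V-side, analogously
    {WV : C} (e₂ : W ⟶ WV) (n₂ : WV ⟶ QV) (he₂ : Nonempty (RegularEpi e₂)) (hn₂ : Mono n₂)
    (hfact₂ : e₂ ≫ n₂ = iV ≫ gV)
    {P₂ : C} (pI₂ : P₂ ⟶ WV) (pA₂ : P₂ ⟶ V) (hP₂ : IsPullback pI₂ pA₂ n₂ gV)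
    (H₂ : Star N WV) (hH₂ : IsImageFact e₂ M H₂)
    (S₂ : Star N P₂) (jS₂ : S₂.T ⟶ H₂.T) (hS₂ : IsStarPullback pI₂ H₂ S₂ jS₂)
    {Q₂ : C} (qP₂ : P₂ ⟶ Q₂) (hqP₂ : IsStarCoequalizer S₂ qP₂) :
    Nonempty (Q₁ ≅ QM) ∧ Nonempty (QM ≅ Q₂) := by
  obtain ⟨hid, -, -, hstab, hrc⟩ := hsr
  have hMk : IsAKernelStar M := ⟨Tq, f₁ ≫ p₁, hM⟩
  have hR₁M : StarLE R₁ M := hM.starLE_s13 (by rw [reassoc_of% hf₁.1])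
  have hR₂M : StarLE R₂ M := hM.starLE_s13 (by rw [hpush.w, reassoc_of% hg₁.1])
  exact ⟨zassenhaus_half hid hstab hrc hps hFk hfUc hR₁ hMk hR₁M hqM he₁ hfact₁ hP₁ hH₁ hS₁ hqP₁,
    (zassenhaus_half hid hstab hrc hps hGk hgVc hR₂ hMk hR₂M hqM he₂ hfact₂ hP₂ hH₂ hS₂
      hqP₂).map Iso.symm⟩

open CategoryTheory CategoryTheory.Limits StarReg in
/-- The Zassenhaus Lemma in a star-regular category with pushouts of regular
epimorphisms satisfying property (*). -/
theorem statement13 {C : Type u} [Category.{v} C] (N : MorphismProperty C)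
    (hfl : HasFiniteLimits C) (hsr : StarRegular N) (hps : PropertyStar N)
    (hpo : HasRegEpiPushouts C)
    -- kernel stars `F*` on `U` and `G*` on `V`, monos `u : U ⟶ A`, `v : V ⟶ A`
    {U V A : C} (F : Star N U) (G : Star N V)
    (u : U ⟶ A) (v : V ⟶ A) (hu : Mono u) (hv : Mono v)
    -- coequalisers of `F*` and `G*` (of which they are the kernel stars)
    {QU : C} (fU : U ⟶ QU) (hFk : IsKernelStar fU F) (hfUc : IsStarCoequalizer F fU)
    {QV : C} (gV : V ⟶ QV) (hGk : IsKernelStar gV G) (hgVc : IsStarCoequalizer G gV)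
    -- the intersection `W = U ∩ V`
    {W : C} (iU : W ⟶ U) (iV : W ⟶ V) (hW : IsPullback iU iV u v)
    -- the restricted stars `(F* ∩ (V×V))*` and `(G* ∩ (U×U))*` on `W`
    (R₁ : Star N W) (j₁ : R₁.T ⟶ F.T) (hR₁ : IsStarPullback iU F R₁ j₁)
    (R₂ : Star N W) (j₂ : R₂.T ⟶ G.T) (hR₂ : IsStarPullback iV G R₂ j₂)
    -- their coequalisers and the pushout, with diagonal `q`
    {W₁ : C} (f₁ : W ⟶ W₁) (hf₁ : IsStarCoequalizer R₁ f₁)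
    {W₂ : C} (g₁ : W ⟶ W₂) (hg₁ : IsStarCoequalizer R₂ g₁)
    {Tq : C} (p₁ : W₁ ⟶ Tq) (p₂ : W₂ ⟶ Tq) (hpush : IsPushout f₁ g₁ p₁ p₂)
    -- the supremum `M = (F* ∩ (V×V))* ∨ (G* ∩ (U×U))*`: kernel star of the diagonal
    (M : Star N W) (hM : IsKernelStar (f₁ ≫ p₁) M)
    -- the middle quotient `(U∩V)/M`
    {QM : C} (qM : W ⟶ QM) (hqM : IsStarCoequalizer M qM)
    -- the U-side: image `fU(U∩V)`, join `P₁ = F* ∨_U (U∩V)`, image star of `M`,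
    -- star `S₁ = F* ∨_U M` and its quotient
    {WU : C} (e₁ : W ⟶ WU) (n₁ : WU ⟶ QU) (he₁ : Nonempty (RegularEpi e₁)) (hn₁ : Mono n₁)
    (hfact₁ : e₁ ≫ n₁ = iU ≫ fU)
    {P₁ : C} (pI₁ : P₁ ⟶ WU) (pA₁ : P₁ ⟶ U) (hP₁ : IsPullback pI₁ pA₁ n₁ fU)
    (H₁ : Star N WU) (hH₁ : IsImageFact e₁ M H₁)
    (S₁ : Star N P₁) (jS₁ : S₁.T ⟶ H₁.T) (hS₁ : IsStarPullback pI₁ H₁ S₁ jS₁)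
    {Q₁ : C} (qP₁ : P₁ ⟶ Q₁) (hqP₁ : IsStarCoequalizer S₁ qP₁)
    -- the V-side, analogously
    {WV : C} (e₂ : W ⟶ WV) (n₂ : WV ⟶ QV) (he₂ : Nonempty (RegularEpi e₂)) (hn₂ : Mono n₂)
    (hfact₂ : e₂ ≫ n₂ = iV ≫ gV)
    {P₂ : C} (pI₂ : P₂ ⟶ WV) (pA₂ : P₂ ⟶ V) (hP₂ : IsPullback pI₂ pA₂ n₂ gV)
    (H₂ : Star N WV) (hH₂ : IsImageFact e₂ M H₂)
    (S₂ : Star N P₂) (jS₂ : S₂.T ⟶ H₂.T) (hS₂ : IsStarPullback pI₂ H₂ S₂ jS₂)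
    {Q₂ : C} (qP₂ : P₂ ⟶ Q₂) (hqP₂ : IsStarCoequalizer S₂ qP₂) :
    Nonempty (Q₁ ≅ QM) ∧ Nonempty (QM ≅ Q₂) :=
  statement13_general N hsr hps F G u v fU hFk hfUc gV hGk hgVc iU iV R₁ j₁ hR₁ R₂ j₂ hR₂ f₁ hf₁ g₁
    hg₁ p₁ p₂ hpush M hM qM hqM e₁ n₁ he₁ hn₁ hfact₁ pI₁ pA₁ hP₁ H₁ hH₁ S₁ jS₁ hS₁ qP₁ hqP₁ e₂ n₂
    he₂ hn₂ hfact₂ pI₂ pA₂ hP₂ H₂ hH₂ S₂ jS₂ hS₂ qP₂ hqP₂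
end
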